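/- For every graph G in T_h and every vertex v of G, there exist a subdivision S of a complete binary tree of height h contained in G with root r, and a path P in G from v to r such that V(P) ∩ V(S) = {r}. -/

import Mathlib

open SimpleGraph

/-- A tree decomposition of a graph `G`. -/
structure TreeDecomp {V : Type} (G : SimpleGraph V) where
  ι : Type
  tree : SimpleGraph ι
  isTree : tree.IsTree
  bag : ι → Finset V
  covers : ∀ v : V, ∃ x, v ∈ bag x
  coversEdge : ∀ ⦃u v : V⦄, G.Adj u v → ∃ x, u ∈ bag x ∧ v ∈ bag x
  bagConn : ∀ v : V, (tree.induce {x | v ∈ bag x}).Connected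

/-- `G` has a tree decomposition of width at most `k` (bags of size at most `k+1`). -/
def TwLE {V : Type} (G : SimpleGraph V) (k : ℕ) : Prop :=
  ∃ D : TreeDecomp G, ∀ x, (D.bag x).card ≤ k + 1

/-- A path decomposition of a graph `G`: a sequence of bags. -/
structure PathDecomp {V : Type} (G : SimpleGraph V) where
  n : ℕ
  bag : Fin n → Finset V
  covers : ∀ v : V, ∃ i, v ∈ bag i
  coversEdge : ∀ ⦃u v : V⦄, G.Adj u v → ∃ i, u ∈ bag i ∧ v ∈ bag i
  consecutive : ∀ (v : V) (i j k : Fin n), i ≤ j → j ≤ k → v ∈ bag i → v ∈ bag k → v ∈ bag j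

/-- `G` has a path decomposition of width at most `k` (bags of size at most `k+1`). -/
def PwLE {V : Type} (G : SimpleGraph V) (k : ℕ) : Prop :=
  ∃ P : PathDecomp G, ∀ i, (P.bag i).card ≤ k + 1

/-- A copy of a subdivision of the tree `T` inside the graph `G`:
branch vertices `φ x`, and for each edge of `T` a path of `G` between the
corresponding branch vertices, internally disjoint from all branch vertices
and from the paths of all other edges. -/
structure SubdivCopy {α V : Type} (T : SimpleGraph α) (G : SimpleGraph V) where
  φ : α → V
  inj : Function.Injective φ
  path : ∀ ⦃x y : α⦄, T.Adj x y → G.Walk (φ x) (φ y)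
  isPath : ∀ ⦃x y : α⦄ (h : T.Adj x y), (path h).IsPath
  branch : ∀ ⦃x y : α⦄ (h : T.Adj x y) (z : α), φ z ∈ (path h).support → z = x ∨ z = y
  disj : ∀ ⦃x y x' y' : α⦄ (h : T.Adj x y) (h' : T.Adj x' y'),
    ({x, y} : Set α) ≠ {x', y'} →
    ∀ v, v ∈ (path h).support → v ∈ (path h').support →
      v ∈ φ '' (({x, y} : Set α) ∩ {x', y'})

/-- The set of vertices used by a subdivision copy. -/
def SubdivCopy.supp {α V : Type} {T : SimpleGraph α} {G : SimpleGraph V}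
    (c : SubdivCopy T G) : Set V :=
  Set.range c.φ ∪ {v | ∃ x y, ∃ h : T.Adj x y, v ∈ (c.path h).support}

/-- `G` contains a subdivision of `T` as a subgraph. -/
def ContainsSubdiv {α V : Type} (T : SimpleGraph α) (G : SimpleGraph V) : Prop :=
  Nonempty (SubdivCopy T G)

/-- `S` is (isomorphic to) a subdivision of `T`: a subdivision copy of `T`
using all vertices and all edges of `S`. -/
def IsSubdivisionOf {α W : Type} (T : SimpleGraph α) (S : SimpleGraph W) : Prop :=
  ∃ c : SubdivCopy T S, c.supp = Set.univ ∧
    ∀ ⦃u w : W⦄, S.Adj u w → ∃ x y, ∃ h : T.Adj x y, s(u, w) ∈ (c.path h).edges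

/-- The complete binary tree of height `h`, as a simple graph: vertices are
binary strings of length at most `h`, with edges between a string and its
one-letter extensions. -/
def CBT (h : ℕ) : SimpleGraph {l : List Bool // l.length ≤ h} :=
  SimpleGraph.fromRel (fun x y => ∃ b, y.val = b :: x.val)

/-- The root of the complete binary tree. -/
def CBTroot (h : ℕ) : {l : List Bool // l.length ≤ h} := ⟨[], by simp⟩

/-- The complete ternary tree of height `h`, as a simple graph. -/
def CTT (h : ℕ) : SimpleGraph {l : List (Fin 3) // l.length ≤ h} :=
  SimpleGraph.fromRel (fun x y => ∃ b, y.val = b :: x.val)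

/-- The root of the complete ternary tree. -/
def CTTroot (h : ℕ) : {l : List (Fin 3) // l.length ≤ h} := ⟨[], by simp⟩

/-- There are `a ∈ A` and `b ∈ B` joined by a walk of `G` avoiding `C`. -/
def LinkedAvoiding {V : Type} (G : SimpleGraph V) (A B C : Set V) : Prop :=
  ∃ a ∈ A, ∃ b ∈ B, ∃ p : G.Walk a b, ∀ x ∈ p.support, x ∉ C

/-- The classes `𝒯_h`: `InT 0 G` iff `G` is connected (hence non-empty);
`InT (h+1) G` iff `G` is connected and has three pairwise disjoint vertex sets
inducing graphs in `𝒯_h`, any two of which are linked by a path avoiding the third. -/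
def InTAux : ℕ → (V : Type) → SimpleGraph V → Prop
  | 0, _, G => G.Connected
  | h + 1, V, G => G.Connected ∧ ∃ V₁ V₂ V₃ : Set V,
      Disjoint V₁ V₂ ∧ Disjoint V₁ V₃ ∧ Disjoint V₂ V₃ ∧
      InTAux h V₁ (G.induce V₁) ∧ InTAux h V₂ (G.induce V₂) ∧ InTAux h V₃ (G.induce V₃) ∧
      LinkedAvoiding G V₁ V₂ V₃ ∧ LinkedAvoiding G V₁ V₃ V₂ ∧ LinkedAvoiding G V₂ V₃ V₁

def InT (h : ℕ) {V : Type} (G : SimpleGraph V) : Prop := InTAux h V G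


/-!
Induction on `h`. For `G ∈ 𝒯_{h+1}` with parts `V₁, V₂, V₃`, let `B` be the first part met by
a path from `v` and `A`, `C` the other two. Through the connected set `B` and the links between
the parts, `v` reaches `A` avoiding `C`, and `C` avoiding `A`. The last vertex `r` at which a
`v`–`C` path leaves a `v`–`A` path is the centre of a fork: paths from `r` to `v`, to some
`a ∈ A` and to some `c ∈ C` that meet only at `r` and touch `A ∪ C` only at `a` and `c`. By
induction `G[A]` contains a subdivided tree of height `h` reached from `a` by a path inside `A`,
and likewise for `C`. Extended by the two branches of the fork, these hang from `r` as the two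
subtrees of a subdivided tree of height `h + 1` with root `r`, and the stem of the fork reaches
it from `v`.
-/

namespace SimpleGraph

variable {V : Type} {G : SimpleGraph V}

lemma Walk.IsPath.append {a b c : V} {p : G.Walk a b} {q : G.Walk b c}
    (hp : p.IsPath) (hq : q.IsPath) (h : ∀ x ∈ p.support, x ∈ q.support → x = b) :
    (p.append q).IsPath := by
  have hq' := hq.support_nodup
  rw [← Walk.cons_tail_support, List.nodup_cons] at hq'
  rw [Walk.isPath_def, Walk.support_append, List.nodup_append]
  refine ⟨hp.support_nodup, hq'.2, ?_⟩
  rintro x hxp _ hxq rfl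
  exact hq'.1 (h x hxp (Walk.cons_tail_support q ▸ List.mem_cons_of_mem _ hxq) ▸ hxq)

lemma Walk.IsPath.eq_of_mem_takeUntil_of_mem_dropUntil [DecidableEq V] {a b u : V}
    {p : G.Walk a b} (hp : p.IsPath) (hu : u ∈ p.support) :
    ∀ x ∈ (p.takeUntil u hu).support, x ∈ (p.dropUntil u hu).support → x = u := by
  intro x hx₁ hx₂
  have hnd := hp.support_nodup
  rw [← p.take_spec hu, Walk.support_append, List.nodup_append] at hnd
  rw [← Walk.cons_tail_support, List.mem_cons] at hx₂
  exact hx₂.resolve_right fun hx => hnd.2.2 x hx₁ x hx rfl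

lemma Walk.exists_isPath_first_mem (S : Set V) {a b : V} (w : G.Walk a b) (hb : b ∈ S) :
    ∃ z ∈ S, ∃ q : G.Walk a z, q.IsPath ∧ (∀ x ∈ q.support, x ∈ S → x = z) ∧
      q.support ⊆ w.support := by
  classical
  suffices ∃ z ∈ S, ∃ q : G.Walk a z, (∀ x ∈ q.support, x ∈ S → x = z) ∧
      q.support ⊆ w.support by
    obtain ⟨z, hz, q, hqS, hqw⟩ := this
    have hsub := q.support_bypass_subset_support
    exact ⟨z, hz, q.bypass, q.bypass_isPath, fun x hx => hqS x (hsub hx),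
      List.Subset.trans hsub hqw⟩
  induction w with
  | nil => exact ⟨_, hb, .nil, by simp, by simp⟩
  | @cons u v c huv w ih =>
    by_cases hu : u ∈ S
    · exact ⟨u, hu, .nil, by simp, by simp⟩
    obtain ⟨z, hz, q, hqS, hqw⟩ := ih hb
    refine ⟨z, hz, .cons huv q, ?_, ?_⟩
    · simp only [Walk.support_cons, List.mem_cons, forall_eq_or_imp]
      exact ⟨fun h => absurd h hu, hqS⟩
    · simpa using List.cons_subset_cons u hqw

lemma Connected.exists_walk_of_induce {B : Set V} (hB : (G.induce B).Connected) {b b' : V}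
    (hb : b ∈ B) (hb' : b' ∈ B) : ∃ w : G.Walk b b', ∀ y ∈ w.support, y ∈ B := by
  obtain ⟨w⟩ := hB ⟨b, hb⟩ ⟨b', hb'⟩
  refine ⟨w.map (Embedding.induce B).toHom, fun y hy => ?_⟩
  replace hy : y ∈ (w.map (Embedding.induce B).toHom).support := hy
  rw [Walk.support_map, List.mem_map] at hy
  obtain ⟨y, -, rfl⟩ := hy
  exact y.2

end SimpleGraph

section Linked

variable {V : Type} {G : SimpleGraph V}

lemma InT.connected {h : ℕ} (hG : InT h G) : G.Connected := by
  cases h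
  exacts [hG, hG.1]

lemma LinkedAvoiding.symm {A B C : Set V} (h : LinkedAvoiding G A B C) :
    LinkedAvoiding G B A C := by
  obtain ⟨a, ha, b, hb, p, hp⟩ := h
  exact ⟨b, hb, a, ha, p.reverse, fun x hx => hp x (by simpa using hx)⟩

lemma LinkedAvoiding.mono {A B C C' : Set V} (h : LinkedAvoiding G A B C) (hC : C' ⊆ C) :
    LinkedAvoiding G A B C' := by
  obtain ⟨a, ha, b, hb, p, hp⟩ := h
  exact ⟨a, ha, b, hb, p, fun x hx hx' => hp x hx (hC hx')⟩

lemma LinkedAvoiding.trans {X A B C : Set V} (hXB : LinkedAvoiding G X B C)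
    (hB : (G.induce B).Connected) (hBC : Disjoint B C) (hBA : LinkedAvoiding G B A C) :
    LinkedAvoiding G X A C := by
  obtain ⟨x, hx, b, hb, p, hp⟩ := hXB
  obtain ⟨b', hb', a, ha, q, hq⟩ := hBA
  obtain ⟨w, hw⟩ := hB.exists_walk_of_induce hb hb'
  refine ⟨x, hx, a, ha, p.append (w.append q), fun y hy => ?_⟩
  rw [Walk.mem_support_append_iff, Walk.mem_support_append_iff] at hy
  rcases hy with hy | hy | hy
  exacts [hp y hy, hBC.notMem_of_mem_left (hw y hy), hq y hy]

lemma LinkedAvoiding.exists_isPath {v : V} {A C : Set V} (h : LinkedAvoiding G {v} A C) :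
    ∃ a ∈ A, ∃ p : G.Walk v a, p.IsPath ∧ ∀ x ∈ p.support, x ∈ A ∪ C → x = a := by
  obtain ⟨_, rfl, b, hb, w, hwC⟩ := h
  obtain ⟨a, ha, p, hp, hpS, hpw⟩ := w.exists_isPath_first_mem (A ∪ C) (Or.inl hb)
  exact ⟨a, ha.resolve_right (hwC a (hpw p.end_mem_support)), p, hp, hpS⟩

end Linked

section Fork

variable {V : Type} {G : SimpleGraph V}

structure Fork (G : SimpleGraph V) (v : V) (A C : Set V) where
  r : V
  a : V
  c : V
  a_mem : a ∈ A
  c_mem : c ∈ C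
  stem : G.Walk v r
  toA : G.Walk r a
  toC : G.Walk r c
  stem_isPath : stem.IsPath
  toA_isPath : toA.IsPath
  toC_isPath : toC.IsPath
  stem_toA : ∀ x ∈ stem.support, x ∈ toA.support → x = r
  stem_toC : ∀ x ∈ stem.support, x ∈ toC.support → x = r
  toA_toC : ∀ x ∈ toA.support, x ∈ toC.support → x = r
  stem_notMem : ∀ x ∈ stem.support, x ∉ A ∪ C
  toA_mem : ∀ x ∈ toA.support, x ∈ A ∪ C → x = a
  toC_mem : ∀ x ∈ toC.support, x ∈ A ∪ C → x = c

/-- The centre `r` is the last vertex of a `v`–`C` path on a `v`–`A` path. -/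
lemma nonempty_fork {v : V} {A C : Set V} (hAC : Disjoint A C)
    (hA : LinkedAvoiding G {v} A C) (hC : LinkedAvoiding G {v} C A) :
    Nonempty (Fork G v A C) := by
  classical
  obtain ⟨a, ha, P, hP, hPS⟩ := hA.exists_isPath
  obtain ⟨c, hc, Q, hQ, hQS⟩ := hC.exists_isPath
  rw [Set.union_comm] at hQS
  obtain ⟨r, hr, Q', hQ', hQ'P, hQ'Q⟩ :=
    Q.reverse.exists_isPath_first_mem {x | x ∈ P.support} (by simp)
  replace hQ'Q : ∀ x ∈ Q'.support, x ∈ Q.support := fun x hx => by simpa using hQ'Q hx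
  have hQ'rev : ∀ x ∈ Q'.reverse.support, x ∈ Q'.support := fun x hx => by simpa using hx
  have hra : r ≠ a := by
    rintro rfl
    exact hAC.ne_of_mem ha hc (hQS r (hQ'Q r Q'.end_mem_support) (Or.inl ha))
  have hsplit := hP.eq_of_mem_takeUntil_of_mem_dropUntil hr
  have htake := P.support_takeUntil_subset_support hr
  have hdrop := P.support_dropUntil_subset_support hr
  refine ⟨⟨r, a, c, ha, hc, P.takeUntil r hr, P.dropUntil r hr, Q'.reverse,
    hP.takeUntil hr, hP.dropUntil hr, hQ'.reverse, hsplit,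
    fun x hx₁ hx₂ => hQ'P x (hQ'rev x hx₂) (htake hx₁),
    fun x hx₁ hx₂ => hQ'P x (hQ'rev x hx₂) (hdrop hx₁), fun x hx hxS => ?_,
    fun x hx => hPS x (hdrop hx), fun x hx => hQS x (hQ'Q x (hQ'rev x hx))⟩⟩
  obtain rfl := hPS x (htake hx) hxS
  exact hra (hsplit x hx (P.dropUntil r hr).end_mem_support).symm

end Fork

section SubdivCopy

variable {α α' V V' : Type} {T : SimpleGraph α} {T' : SimpleGraph α'}
  {G : SimpleGraph V} {G' : SimpleGraph V'}

namespace SubdivCopy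

lemma φ_mem_supp (c : SubdivCopy T G) (x : α) : c.φ x ∈ c.supp :=
  Or.inl ⟨x, rfl⟩

lemma mem_supp_of_mem_path (c : SubdivCopy T G) {x y : α} (h : T.Adj x y) {u : V}
    (hu : u ∈ (c.path h).support) : u ∈ c.supp :=
  Or.inr ⟨x, y, h, hu⟩

def map (f : G ↪g G') (c : SubdivCopy T G) : SubdivCopy T G' where
  φ := f ∘ c.φ
  inj := f.injective.comp c.inj
  path _ _ h := (c.path h).map f.toHom
  isPath _ _ h := (c.isPath h).map f.injective
  branch _ _ h z hz := by
    rw [Walk.support_map, List.mem_map] at hz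
    obtain ⟨u, hu, hfu⟩ := hz
    exact c.branch h z (f.injective hfu ▸ hu)
  disj _ _ _ _ h h' hne v hv hv' := by
    rw [Walk.support_map, List.mem_map] at hv hv'
    obtain ⟨u, hu, rfl⟩ := hv
    obtain ⟨u', hu', hfu⟩ := hv'
    obtain rfl := f.injective hfu
    rw [Set.image_comp]
    exact Set.mem_image_of_mem f (c.disj h h' hne u' hu hu')

lemma supp_map (f : G ↪g G') (c : SubdivCopy T G) : (c.map f).supp = f '' c.supp := by
  ext u
  simp only [supp, map, Walk.support_map, Set.image_union, Set.mem_union, Set.mem_range,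
    Set.mem_image, List.mem_map, Function.comp_apply]
  aesop

def comap (e : T' ≃g T) (c : SubdivCopy T G) : SubdivCopy T' G where
  φ := c.φ ∘ e
  inj := c.inj.comp e.injective
  path _ _ h := c.path (e.map_adj_iff.mpr h)
  isPath _ _ _ := c.isPath _
  branch _ _ _ z hz := (c.branch _ (e z) hz).imp (fun h => e.injective h) fun h => e.injective h
  disj x y x' y' _ _ hne v hv hv' := by
    have hne' : ({e x, e y} : Set α) ≠ {e x', e y'} := by
      rw [← Set.image_pair, ← Set.image_pair]
      exact fun H => hne (e.injective.image_injective H)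
    obtain ⟨a, ha, rfl⟩ := c.disj _ _ hne' v hv hv'
    rw [← Set.image_pair, ← Set.image_pair, ← Set.image_inter e.injective] at ha
    obtain ⟨b, hb, rfl⟩ := ha
    exact ⟨b, hb, rfl⟩

lemma supp_comap_subset (e : T' ≃g T) (c : SubdivCopy T G) : (c.comap e).supp ⊆ c.supp := by
  rintro u (⟨x, rfl⟩ | ⟨x, y, h, hu⟩)
  · exact c.φ_mem_supp (e x)
  · exact c.mem_supp_of_mem_path (e.map_adj_iff.mpr h) hu

end SubdivCopy

structure RootedCopy (T : SimpleGraph α) (ρ : α) (G : SimpleGraph V) (v : V) where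
  copy : SubdivCopy T G
  walk : G.Walk v (copy.φ ρ)
  walk_isPath : walk.IsPath
  eq_root : ∀ u ∈ walk.support, u ∈ copy.supp → u = copy.φ ρ

namespace RootedCopy

variable {ρ : α} {v : V}

def body (R : RootedCopy T ρ G v) : Set V := R.copy.supp ∪ {u | u ∈ R.walk.support}

def single [Subsingleton α] (T : SimpleGraph α) (ρ : α) (v : V) : RootedCopy T ρ G v where
  copy :=
    { φ := fun _ => v
      inj := fun x y _ => Subsingleton.elim x y
      path _ _ h := (T.ne_of_adj h (Subsingleton.elim _ _)).elim
      isPath _ _ h := (T.ne_of_adj h (Subsingleton.elim _ _)).elim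
      branch _ _ h := (T.ne_of_adj h (Subsingleton.elim _ _)).elim
      disj _ _ _ _ h := (T.ne_of_adj h (Subsingleton.elim _ _)).elim }
  walk := .nil
  walk_isPath := .nil
  eq_root _ hu _ := List.mem_singleton.mp hu

def map (f : G ↪g G') (R : RootedCopy T ρ G v) : RootedCopy T ρ G' (f v) where
  copy := R.copy.map f
  walk := R.walk.map f.toHom
  walk_isPath := R.walk_isPath.map f.injective
  eq_root u hu hu' := by
    replace hu : u ∈ (R.walk.map f.toHom).support := hu
    rw [Walk.support_map, List.mem_map] at hu
    rw [SubdivCopy.supp_map] at hu'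
    obtain ⟨x, hx, rfl⟩ := hu
    obtain ⟨y, hy, hyx⟩ := hu'
    obtain rfl := f.injective hyx
    exact congrArg f (R.eq_root y hx hy)

lemma body_map_subset (f : G ↪g G') (R : RootedCopy T ρ G v) :
    (R.map f).body ⊆ Set.range f := by
  rintro u (hu | hu)
  · rw [map, SubdivCopy.supp_map] at hu
    exact Set.image_subset_range _ _ hu
  · replace hu : u ∈ (R.walk.map f.toHom).support := hu
    rw [Walk.support_map, List.mem_map] at hu
    obtain ⟨x, -, rfl⟩ := hu
    exact ⟨x, rfl⟩

lemma exists_of_induce {S : Set V} {a : V} (ha : a ∈ S)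
    (R : RootedCopy T ρ (G.induce S) ⟨a, ha⟩) : ∃ R' : RootedCopy T ρ G a, R'.body ⊆ S :=
  ⟨R.map (Embedding.induce S),
    (R.body_map_subset _).trans (Set.range_subset_iff.mpr Subtype.prop)⟩

def comap (e : T' ≃g T) (R : RootedCopy T ρ G v) (ρ' : α') (hρ : e ρ' = ρ) :
    RootedCopy T' ρ' G v where
  copy := R.copy.comap e
  walk := R.walk.copy rfl
    (show R.copy.φ ρ = (R.copy.comap e).φ ρ' from congrArg R.copy.φ hρ.symm)
  walk_isPath := by rw [Walk.isPath_copy]; exact R.walk_isPath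
  eq_root u hu hu' := by
    rw [Walk.support_copy] at hu
    exact (R.eq_root u hu (R.copy.supp_comap_subset e hu')).trans (congrArg R.copy.φ hρ.symm)

def prepend (R : RootedCopy T ρ G v) {u : V} (P : G.Walk u v) (hP : P.IsPath)
    (hPR : ∀ x ∈ P.support, x ∈ R.body → x = v) : RootedCopy T ρ G u where
  copy := R.copy
  walk := P.append R.walk
  walk_isPath := hP.append R.walk_isPath fun x hx hx' => hPR x hx (Or.inr hx')
  eq_root x hx hx' := by
    rw [Walk.mem_support_append_iff] at hx
    rcases hx with hx | hx
    · obtain rfl := hPR x hx (Or.inl hx')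
      exact R.eq_root x R.walk.start_mem_support hx'
    · exact R.eq_root x hx hx'

lemma body_prepend_subset (R : RootedCopy T ρ G v) {u : V} (P : G.Walk u v) (hP : P.IsPath)
    (hPR : ∀ x ∈ P.support, x ∈ R.body → x = v) :
    (R.prepend P hP hPR).body ⊆ R.body ∪ {x | x ∈ P.support} := by
  rintro x (hx | hx)
  · exact Or.inl (Or.inl hx)
  · change x ∈ (P.append R.walk).support at hx
    rw [Walk.mem_support_append_iff] at hx
    exact hx.elim Or.inr fun hx => Or.inl (Or.inr hx)

end RootedCopy

end SubdivCopy

section RootJoin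

variable {ι β V : Type} {T : SimpleGraph β} {ρ : β} {G : SimpleGraph V}

/-- `none` is the new root and `some (i, x)` is the vertex `x` of the `i`-th copy of `T`. -/
def rootJoin (ι : Type) (T : SimpleGraph β) (ρ : β) : SimpleGraph (Option (ι × β)) where
  Adj
    | none, none => False
    | none, some (_, x) => x = ρ
    | some (_, x), none => x = ρ
    | some (i, x), some (j, y) => i = j ∧ T.Adj x y
  symm := ⟨by rintro (_ | ⟨i, x⟩) (_ | ⟨j, y⟩) h <;> simp_all [T.adj_comm]⟩
  loopless := ⟨by rintro (_ | ⟨i, x⟩) h <;> simp_all⟩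

namespace RootedCopy

variable {r : V}

structure IsFan (R : ι → RootedCopy T ρ G r) : Prop where
  inter : Pairwise fun i j => ∀ u ∈ (R i).body, u ∈ (R j).body → u = r
  notMem : ∀ i, r ∉ (R i).copy.supp

lemma IsFan.notMem_supp {R : ι → RootedCopy T ρ G r} (hR : IsFan R) {i j : ι} (hij : i ≠ j)
    {u : V} (hu : u ∈ (R i).body) : u ∉ (R j).copy.supp :=
  fun hu' => hR.notMem j (hR.inter hij u hu (Or.inl hu') ▸ hu')

variable (R : ι → RootedCopy T ρ G r)

def joinφ : Option (ι × β) → V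
  | none => r
  | some (i, x) => (R i).copy.φ x

def joinPath : ∀ ⦃x y : Option (ι × β)⦄, (rootJoin ι T ρ).Adj x y →
    G.Walk (joinφ R x) (joinφ R y)
  | none, none, h => h.elim
  | none, some (i, _), rfl => (R i).walk
  | some (i, _), none, rfl => (R i).walk.reverse
  | some (i, _), some (_, _), ⟨rfl, e⟩ => (R i).copy.path e

lemma joinPath_isPath ⦃x y : Option (ι × β)⦄ (h : (rootJoin ι T ρ).Adj x y) :
    (joinPath R h).IsPath := by
  match x, y, h with
  | none, none, h => exact h.elim
  | none, some (i, _), rfl => exact (R i).walk_isPath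
  | some (i, _), none, rfl => exact (R i).walk_isPath.reverse
  | some (i, _), some (_, _), ⟨rfl, e⟩ => exact (R i).copy.isPath e

lemma mem_joinPath_support {x y : Option (ι × β)} (h : (rootJoin ι T ρ).Adj x y) :
    (∃ i, ({x, y} : Set (Option (ι × β))) = {none, some (i, ρ)} ∧
      ∀ u, u ∈ (joinPath R h).support ↔ u ∈ (R i).walk.support) ∨
    (∃ i a b, ∃ e : T.Adj a b,
      ({x, y} : Set (Option (ι × β))) = {some (i, a), some (i, b)} ∧
      ∀ u, u ∈ (joinPath R h).support ↔ u ∈ ((R i).copy.path e).support) := by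
  match x, y, h with
  | none, none, h => exact h.elim
  | none, some (i, _), rfl => exact .inl ⟨i, rfl, fun _ => Iff.rfl⟩
  | some (i, _), none, rfl =>
    exact .inl ⟨i, Set.pair_comm _ _, fun u =>
      show u ∈ (R i).walk.reverse.support ↔ _ by rw [Walk.support_reverse, List.mem_reverse]⟩
  | some (i, x), some (_, y), ⟨rfl, e⟩ => exact .inr ⟨i, x, y, e, rfl, fun _ => Iff.rfl⟩

variable {R}

lemma joinφ_injective (hR : IsFan R) : Function.Injective (joinφ R) := by
  rintro (_ | ⟨i, x⟩) (_ | ⟨j, y⟩) hxy <;> simp only [joinφ] at hxy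
  · rfl
  · exact (hR.notMem j (Set.mem_of_eq_of_mem hxy ((R j).copy.φ_mem_supp y))).elim
  · exact (hR.notMem i (Set.mem_of_eq_of_mem hxy.symm ((R i).copy.φ_mem_supp x))).elim
  · obtain rfl | hij := eq_or_ne i j
    · rw [(R i).copy.inj hxy]
    · exact (hR.notMem_supp hij (Or.inl ((R i).copy.φ_mem_supp x))
        (hxy ▸ (R j).copy.φ_mem_supp y)).elim

lemma joinPath_branch (hR : IsFan R) ⦃x y : Option (ι × β)⦄ (h : (rootJoin ι T ρ).Adj x y)
    (z : Option (ι × β)) (hz : joinφ R z ∈ (joinPath R h).support) : z = x ∨ z = y := by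
  change z ∈ ({x, y} : Set (Option (ι × β)))
  rcases mem_joinPath_support R h with ⟨i, hxy, hs⟩ | ⟨i, a, b, e, hxy, hs⟩ <;>
    rw [hxy] <;> rw [hs] at hz <;> rcases z with _ | ⟨j, c⟩
  · exact Or.inl rfl
  · obtain rfl | hij := eq_or_ne i j
    · exact Or.inr (by rw [(R i).copy.inj ((R i).eq_root _ hz ((R i).copy.φ_mem_supp c))]; rfl)
    · exact (hR.notMem_supp hij (Or.inr hz) ((R j).copy.φ_mem_supp c)).elim
  · exact (hR.notMem i ((R i).copy.mem_supp_of_mem_path e hz)).elim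
  · obtain rfl | hij := eq_or_ne i j
    · rcases (R i).copy.branch e c hz with rfl | rfl
      exacts [Or.inl rfl, Or.inr rfl]
    · exact (hR.notMem_supp hij (Or.inl ((R i).copy.mem_supp_of_mem_path e hz))
        ((R j).copy.φ_mem_supp c)).elim

lemma joinPath_disj (hR : IsFan R) ⦃x y x' y' : Option (ι × β)⦄
    (h : (rootJoin ι T ρ).Adj x y) (h' : (rootJoin ι T ρ).Adj x' y')
    (hne : ({x, y} : Set (Option (ι × β))) ≠ {x', y'}) (u : V)
    (hu : u ∈ (joinPath R h).support) (hu' : u ∈ (joinPath R h').support) :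
    u ∈ joinφ R '' (({x, y} : Set (Option (ι × β))) ∩ {x', y'}) := by
  have root_sub {i j : ι} {a b : β} (e : T.Adj a b) (hu : u ∈ (R i).walk.support)
      (hu' : u ∈ ((R j).copy.path e).support) :
      u ∈ joinφ R '' (({none, some (i, ρ)} : Set (Option (ι × β))) ∩
        {some (j, a), some (j, b)}) := by
    obtain rfl | hij := eq_or_ne i j
    · obtain rfl := (R i).eq_root u hu ((R i).copy.mem_supp_of_mem_path e hu')
      refine ⟨some (i, ρ), ⟨Or.inr rfl, ?_⟩, rfl⟩
      rcases (R i).copy.branch e ρ hu' with rfl | rfl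
      exacts [Or.inl rfl, Or.inr rfl]
    · exact (hR.notMem_supp hij (Or.inr hu) ((R j).copy.mem_supp_of_mem_path e hu')).elim
  rcases mem_joinPath_support R h with ⟨i, hxy, hs⟩ | ⟨i, a, b, e, hxy, hs⟩ <;>
    rcases mem_joinPath_support R h' with ⟨j, hxy', hs'⟩ | ⟨j, a', b', e', hxy', hs'⟩ <;>
    rw [hxy, hxy'] at hne ⊢ <;> rw [hs] at hu <;> rw [hs'] at hu'
  · have hij : i ≠ j := by rintro rfl; exact hne rfl
    exact ⟨none, ⟨Or.inl rfl, Or.inl rfl⟩, (hR.inter hij u (Or.inr hu) (Or.inr hu')).symm⟩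
  · exact root_sub e' hu hu'
  · rw [Set.inter_comm]
    exact root_sub e hu' hu
  · obtain rfl | hij := eq_or_ne i j
    · have hpair (a b : β) : ({some (i, a), some (i, b)} : Set (Option (ι × β))) =
          (fun c => some (i, c)) '' {a, b} := (Set.image_pair (fun c => some (i, c)) a b).symm
      rw [hpair, hpair] at hne ⊢
      obtain ⟨c, hc, rfl⟩ := (R i).copy.disj e e' (fun H => hne (by rw [H])) u hu hu'
      exact ⟨some (i, c), ⟨⟨c, hc.1, rfl⟩, ⟨c, hc.2, rfl⟩⟩, rfl⟩
    · exact (hR.notMem_supp hij (Or.inl ((R i).copy.mem_supp_of_mem_path e hu))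
        ((R j).copy.mem_supp_of_mem_path e' hu')).elim

def join (R : ι → RootedCopy T ρ G r) (hR : IsFan R) :
    RootedCopy (rootJoin ι T ρ) none G r where
  copy :=
    { φ := joinφ R
      inj := joinφ_injective hR
      path := joinPath R
      isPath := joinPath_isPath R
      branch := joinPath_branch hR
      disj := joinPath_disj hR }
  walk := .nil
  walk_isPath := .nil
  eq_root _ hu _ := List.mem_singleton.mp hu

lemma body_join_subset (hR : IsFan R) : (join R hR).body ⊆ insert r (⋃ i, (R i).body) := by
  rintro u ((⟨_ | ⟨i, a⟩, rfl⟩ | ⟨x, y, h, hu⟩) | hu)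
  · exact Or.inl rfl
  · exact Or.inr (Set.mem_iUnion.mpr ⟨i, Or.inl ((R i).copy.φ_mem_supp a)⟩)
  · change u ∈ (joinPath R h).support at hu
    rcases mem_joinPath_support R h with ⟨i, -, hs⟩ | ⟨i, a, b, e, -, hs⟩ <;> rw [hs] at hu
    · exact Or.inr (Set.mem_iUnion.mpr ⟨i, Or.inr hu⟩)
    · exact Or.inr (Set.mem_iUnion.mpr ⟨i, Or.inl ((R i).copy.mem_supp_of_mem_path e hu)⟩)
  · exact Or.inl (List.mem_singleton.mp hu)

end RootedCopy

end RootJoin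

section CompleteBinaryTree

lemma cbt_adj_iff {h : ℕ} {x y : {l : List Bool // l.length ≤ h}} :
    (CBT h).Adj x y ↔ (∃ b, y.1 = b :: x.1) ∨ ∃ b, x.1 = b :: y.1 := by
  rw [CBT, fromRel_adj]
  refine and_iff_right_of_imp ?_
  rintro (⟨b, hb⟩ | ⟨b, hb⟩) rfl <;> simpa using congrArg List.length hb

/-- Children are obtained by prepending a letter, so the subtree of the root's child `[b]`
consists of the lists ending in `b`. -/
def cbtSuccEquiv (h : ℕ) :
    Option (Bool × {l : List Bool // l.length ≤ h}) ≃
      {l : List Bool // l.length ≤ h + 1} where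
  toFun
    | none => CBTroot (h + 1)
    | some (b, x) => ⟨x.1 ++ [b], by simpa using x.2⟩
  invFun l :=
    if hl : l.1 = [] then none
    else some (l.1.getLast hl, ⟨l.1.dropLast, by simpa using l.2⟩)
  left_inv := by rintro (_ | ⟨b, x⟩) <;> simp [CBTroot]
  right_inv := by
    rintro ⟨l, hl⟩
    by_cases hl' : l = []
    · subst hl'
      simp [CBTroot]
    · simp [hl', List.dropLast_append_getLast]

def cbtSuccIso (h : ℕ) : rootJoin Bool (CBT h) (CBTroot h) ≃g CBT (h + 1) where
  toEquiv := cbtSuccEquiv h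
  map_rel_iff' := by
    rintro (_ | ⟨b, x⟩) (_ | ⟨b', y⟩) <;>
      simp only [cbt_adj_iff, cbtSuccEquiv, rootJoin, CBTroot, Equiv.coe_fn_mk,
        ← List.cons_append, List.append_singleton_inj, List.append_eq_singleton_iff,
        Subtype.ext_iff] <;>
      aesop

end CompleteBinaryTree

section Main

variable {β V : Type} {T : SimpleGraph β} {ρ : β} {G : SimpleGraph V}

lemma Fork.nonempty_rootedCopy_rootJoin {v : V} {A C : Set V} (F : Fork G v A C)
    (hAC : Disjoint A C) (RA : RootedCopy T ρ G F.a) (hRA : RA.body ⊆ A)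
    (RC : RootedCopy T ρ G F.c) (hRC : RC.body ⊆ C) :
    Nonempty (RootedCopy (rootJoin Bool T ρ) none G v) := by
  let RA' := RA.prepend F.toA F.toA_isPath fun x hx hxb => F.toA_mem x hx (Or.inl (hRA hxb))
  let RC' := RC.prepend F.toC F.toC_isPath fun x hx hxb => F.toC_mem x hx (Or.inr (hRC hxb))
  have hA' : RA'.body ⊆ A ∪ {x | x ∈ F.toA.support} :=
    (RA.body_prepend_subset _ _ _).trans (Set.union_subset_union_left _ hRA)
  have hC' : RC'.body ⊆ C ∪ {x | x ∈ F.toC.support} :=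
    (RC.body_prepend_subset _ _ _).trans (Set.union_subset_union_left _ hRC)
  have hrAC : F.r ∉ A ∪ C := F.stem_notMem _ F.stem.end_mem_support
  have hAC' : ∀ x ∈ RA'.body, x ∈ RC'.body → x = F.r := by
    intro x hxA hxC
    rcases hA' hxA with hxA | hxA <;> rcases hC' hxC with hxC | hxC
    · exact (hAC.ne_of_mem hxA hxC rfl).elim
    · exact (hAC.ne_of_mem hxA F.c_mem (F.toC_mem x hxC (Or.inl hxA))).elim
    · exact (hAC.ne_of_mem F.a_mem hxC (F.toA_mem x hxA (Or.inr hxC)).symm).elim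
    · exact F.toA_toC x hxA hxC
  let R : Bool → RootedCopy T ρ G F.r := fun b => if b then RA' else RC'
  have hR : RootedCopy.IsFan R := by
    refine ⟨?_, ?_⟩
    · rintro (_ | _) (_ | _) hij x hi hj
      exacts [(hij rfl).elim, hAC' x hj hi, hAC' x hi hj, (hij rfl).elim]
    · rintro (_ | _) hr
      exacts [hrAC (Or.inr (hRC (Or.inl hr))), hrAC (Or.inl (hRA (Or.inl hr)))]
  refine ⟨(RootedCopy.join R hR).prepend F.stem F.stem_isPath fun x hx hxJ => ?_⟩
  rcases RootedCopy.body_join_subset hR hxJ with rfl | hxJ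
  · rfl
  obtain ⟨(_ | _), hxJ⟩ := Set.mem_iUnion.mp hxJ
  · rcases hC' hxJ with hxC | hxC
    exacts [(F.stem_notMem x hx (Or.inr hxC)).elim, F.stem_toC x hx hxC]
  · rcases hA' hxJ with hxA | hxA
    exacts [(F.stem_notMem x hx (Or.inl hxA)).elim, F.stem_toA x hx hxA]

lemma nonempty_rootedCopy_rootJoin_of_linked {v : V} {A B C : Set V} (hAB : Disjoint A B)
    (hAC : Disjoint A C) (hBC : Disjoint B C)
    (hA : ∀ a ∈ A, ∃ R : RootedCopy T ρ G a, R.body ⊆ A)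
    (hC : ∀ c ∈ C, ∃ R : RootedCopy T ρ G c, R.body ⊆ C) (hB : (G.induce B).Connected)
    (hBA : LinkedAvoiding G B A C) (hBC' : LinkedAvoiding G B C A)
    (hvB : LinkedAvoiding G {v} B (A ∪ C)) :
    Nonempty (RootedCopy (rootJoin Bool T ρ) none G v) := by
  obtain ⟨F⟩ := nonempty_fork hAC ((hvB.mono Set.subset_union_right).trans hB hBC hBA)
    ((hvB.mono Set.subset_union_left).trans hB hAB.symm hBC')
  obtain ⟨RA, hRA⟩ := hA F.a F.a_mem
  obtain ⟨RC, hRC⟩ := hC F.c F.c_mem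
  exact F.nonempty_rootedCopy_rootJoin hAC RA hRA RC hRC

end Main

theorem nonempty_rootedCopy_cbt_of_InT : ∀ (h : ℕ) {V : Type} (G : SimpleGraph V), InT h G →
    ∀ v : V, Nonempty (RootedCopy (CBT h) (CBTroot h) G v)
  | 0, _, _, _, v =>
    have : Subsingleton {l : List Bool // l.length ≤ 0} :=
      ⟨fun x y => Subtype.ext <| by rw [List.eq_nil_of_length_eq_zero (Nat.le_zero.mp x.2),
        List.eq_nil_of_length_eq_zero (Nat.le_zero.mp y.2)]⟩
    ⟨RootedCopy.single _ _ v⟩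
  | h + 1, V, G, ⟨hconn, V₁, V₂, V₃, d12, d13, d23, h1, h2, h3, L12, L13, L23⟩, v => by
    have IH {S : Set V} (hS : InT h (G.induce S)) :
        ∀ a ∈ S, ∃ R : RootedCopy (CBT h) (CBTroot h) G a, R.body ⊆ S := fun a ha =>
      (nonempty_rootedCopy_cbt_of_InT h _ hS ⟨a, ha⟩).elim (RootedCopy.exists_of_induce ha)
    suffices Nonempty (RootedCopy (rootJoin Bool (CBT h) (CBTroot h)) none G v) from
      this.map fun R => R.comap (cbtSuccIso h).symm _ ((cbtSuccIso h).symm_apply_eq.mpr rfl)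
    obtain ⟨u₀⟩ := (InT.connected h1).nonempty
    obtain ⟨w⟩ := hconn.preconnected v u₀
    obtain ⟨z, hz, R, -, hR, -⟩ :=
      w.exists_isPath_first_mem (V₁ ∪ V₂ ∪ V₃) (Or.inl (Or.inl u₀.2))
    have first {B D : Set V} (hBD : Disjoint B D) (hD : D ⊆ V₁ ∪ V₂ ∪ V₃)
        (hzB : z ∈ B) : LinkedAvoiding G {v} B D :=
      ⟨v, rfl, z, hzB, R, fun x hx hxD => hBD.ne_of_mem hzB hxD (hR x hx (hD hxD)).symm⟩
    rcases hz with (hz | hz) | hz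
    · exact nonempty_rootedCopy_rootJoin_of_linked d12.symm d23 d13 (IH h2) (IH h3)
        (InT.connected h1) L12 L13
        (first (Set.disjoint_union_right.mpr ⟨d12, d13⟩) (by tauto_set) hz)
    · exact nonempty_rootedCopy_rootJoin_of_linked d12 d13 d23 (IH h1) (IH h3)
        (InT.connected h2) L12.symm L23
        (first (Set.disjoint_union_right.mpr ⟨d12.symm, d23⟩) (by tauto_set) hz)
    · exact nonempty_rootedCopy_rootJoin_of_linked d13 d12 d23.symm (IH h1) (IH h2)
        (InT.connected h3) L13.symm L23.symm
        (first (Set.disjoint_union_right.mpr ⟨d13.symm, d23.symm⟩) (by tauto_set) hz)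

theorem stmt3 {V : Type} (G : SimpleGraph V) (h : ℕ) (hG : InT h G) (v : V) :
    ∃ (c : SubdivCopy (CBT h) G) (w : G.Walk v (c.φ (CBTroot h))),
      w.IsPath ∧ ∀ u ∈ w.support, u ∈ c.supp → u = c.φ (CBTroot h) := by
  obtain ⟨R⟩ := nonempty_rootedCopy_cbt_of_InT h G hG v
  exact ⟨R.copy, R.walk, R.walk_isPath, R.eq_root⟩
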